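/- arXiv:1311.2974 — 2 statements merged into one kernel-verified Lean document; each statement's English description precedes it below -/
import Mathlib

section
/- In the category of posets, the regular epimorphism e : 2 ⊔ 2 → 3 (the coequalizer of the two maps 1 → 2 ⊔ 2 picking out 1 and 0′, which identifies 1 with 0′) does not satisfy the other pullback lemma: there is a commutative two-square diagram over e in which the left square and the outer square are pullbacks but the right square is not. -/
open CategoryTheory

/-- `|2|`: the discrete poset on two elements. -/
def DBool : Type := Bool

instance : DecidableEq DBool := inferInstanceAs (DecidableEq Bool)
instance : Fintype DBool := inferInstanceAs (Fintype Bool)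

instance : PartialOrder DBool where
  le a b := a = b
  le_refl _ := rfl
  le_trans _ _ _ h h' := Eq.trans h h'
  le_antisymm _ _ h _ := h

instance : DecidableRel (α := DBool) (· ≤ ·) := fun a b =>
  inferInstanceAs (Decidable (a = b))

instance : DecidableRel (α := Bool ⊕ Bool) (· ≤ ·) := fun a b => by
  rcases a with a | a <;> rcases b with b | b
  · exact decidable_of_iff _ Sum.inl_le_inl_iff.symm
  · exact isFalse Sum.not_inl_le_inr
  · exact isFalse Sum.not_inr_le_inl
  · exact decidable_of_iff _ Sum.inr_le_inr_iff.symm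

/-- The regular epimorphism `e : 2 ⊔ 2 → 3`, given by `0↦0, 1↦1, 0'↦1, 1'↦2`
(the coequalizer identifying `1` with `0'`). -/
def e : PartOrd.of (Bool ⊕ Bool) ⟶ PartOrd.of (Fin 3) :=
  PartOrd.ofHom (OrderHom.mk
    (Sum.elim (fun b => if b then (1 : Fin 3) else 0) (fun b => if b then 2 else 1))
    (by decide) : (Bool ⊕ Bool) →o Fin 3)

/-- The top-right map `{0↦0, 1↦1} : |2| → 2`. -/
def t₂ : PartOrd.of DBool ⟶ PartOrd.of Bool :=
  PartOrd.ofHom (OrderHom.mk (fun b => (show Bool from b)) (by decide) : DBool →o Bool)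

/-- The left vertical map `|2| → 2 ⊔ 2`, `0 ↦ 0, 1 ↦ 1'`. -/
def vA : PartOrd.of DBool ⟶ PartOrd.of (Bool ⊕ Bool) :=
  PartOrd.ofHom (OrderHom.mk (fun b => if (show Bool from b) then Sum.inr true else Sum.inl false)
    (by decide) : DBool →o Bool ⊕ Bool)

/-- The middle vertical map `{0↦0, 1↦2} : |2| → 3`. -/
def vB : PartOrd.of DBool ⟶ PartOrd.of (Fin 3) :=
  PartOrd.ofHom (OrderHom.mk (fun b => if (show Bool from b) then (2 : Fin 3) else 0)
    (by decide) : DBool →o Fin 3)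

/-- The right vertical map `{0↦0, 1↦2} : 2 → 3`. -/
def vC : PartOrd.of Bool ⟶ PartOrd.of (Fin 3) :=
  PartOrd.ofHom (OrderHom.mk (fun b => if b then (2 : Fin 3) else 0) (by decide) : Bool →o Fin 3)

/-!
Pulling `e` back along `{0 ↦ 0, 1 ↦ 2}` gives the fibres `{0}` and `{1'}`, which are incomparable
in `2 ⊔ 2`: the relation `0 ≤ 2` of `3` exists only through the identification `1 = 0'`, which
the pullback does not see. Hence the left and outer squares have the discrete poset `|2|` as
pullback, whereas the right square, a pullback of an identity, would make `|2| → 2` an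
isomorphism.
-/

open Limits

namespace PartOrd

section IsPullback

variable {P X Y Z : PartOrd.{u}} {fst : P ⟶ X} {snd : P ⟶ Y} {f : X ⟶ Z} {g : Y ⟶ Z}

/-- The conditions say that `p ↦ (fst p, snd p)` is an order isomorphism onto the set-theoretic
fibre product `{(x, y) | f x = g y}` with the product order. -/
theorem isPullback_of_surjective_of_reflect_le (comm : fst ≫ f = snd ≫ g)
    (surj : ∀ x y, f x = g y → ∃ p, fst p = x ∧ snd p = y)
    (reflect : ∀ p q, fst p ≤ fst q → snd p ≤ snd q → p ≤ q) :
    IsPullback fst snd f g := by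
  choose lift hlift using surj
  have hcond (s : PullbackCone f g) (w : s.pt) : f (s.fst w) = g (s.snd w) :=
    congr($(s.condition) w)
  refine .of_isLimit (PullbackCone.IsLimit.mk comm
    (fun s => ofHom ⟨fun w => lift _ _ (hcond s w), fun w w' hw => ?_⟩)
    (fun s => ext fun w => (hlift _ _ (hcond s w)).1)
    (fun s => ext fun w => (hlift _ _ (hcond s w)).2)
    (fun s m hfst hsnd => ext fun w => ?_))
  · obtain ⟨h₁, h₂⟩ := hlift _ _ (hcond s w)
    obtain ⟨h₁', h₂'⟩ := hlift _ _ (hcond s w')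
    exact reflect _ _ (by rw [h₁, h₁']; exact s.fst.hom.monotone hw)
      (by rw [h₂, h₂']; exact s.snd.hom.monotone hw)
  · show m w = lift _ _ (hcond s w)
    obtain ⟨h₁, h₂⟩ := hlift _ _ (hcond s w)
    have k₁ : fst (m w) = fst (lift _ _ (hcond s w)) := congr($hfst w).trans h₁.symm
    have k₂ : snd (m w) = snd (lift _ _ (hcond s w)) := congr($hsnd w).trans h₂.symm
    exact le_antisymm (reflect _ _ k₁.le k₂.le) (reflect _ _ k₁.ge k₂.ge)

end IsPullback

def point {X : PartOrd.{u}} (x : X) : of PUnit.{u + 1} ⟶ X :=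
  ofHom (OrderHom.const _ x)

end PartOrd

open PartOrd

section RegularEpi

lemma point_comp_e : point (Sum.inl true) ≫ e = point (Sum.inr false) ≫ e := rfl

variable (s : Cofork (point (X := of (Bool ⊕ Bool)) (.inl true)) (point (.inr false)))

lemma π_inl_true_eq_π_inr_false : s.π (Sum.inl true) = s.π (Sum.inr false) :=
  congr($(s.condition) PUnit.unit)

def descE : of (Fin 3) ⟶ s.pt :=
  ofHom ⟨![s.π (.inl false), s.π (.inl true), s.π (.inr true)],
    Fin.monotone_iff_le_succ.2 <| Fin.forall_fin_two.2
      ⟨s.π.hom.monotone (by decide),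
        (π_inl_true_eq_π_inr_false s).trans_le (s.π.hom.monotone (by decide))⟩⟩

lemma e_comp_descE : e ≫ descE s = s.π := by
  ext ((_ | _) | (_ | _))
  exacts [rfl, rfl, π_inl_true_eq_π_inr_false s, rfl]

lemma e_surjective : Function.Surjective e := by decide

def regularEpiE : RegularEpi e where
  W := of PUnit
  left := point (Sum.inl true)
  right := point (Sum.inr false)
  w := point_comp_e
  isColimit :=
    have := ConcreteCategory.epi_of_surjective e e_surjective
    Cofork.IsColimit.mk _ descE e_comp_descE fun s _ hm =>
      (cancel_epi e).1 (hm.trans (e_comp_descE s).symm)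

end RegularEpi

lemma not_isIso_t₂ : ¬ IsIso t₂ := by
  intro _
  have hinv (b : Bool) : t₂ (inv t₂ b) = b := congr($(IsIso.inv_hom_id t₂) b)
  have hconst : inv t₂ false = inv t₂ true := (inv t₂).hom.monotone (Bool.false_le true)
  exact Bool.false_ne_true ((hinv false).symm.trans (hconst ▸ hinv true))

/-- **Counterexample to the other pullback lemma in `Pos`.** The map
`e : 2 ⊔ 2 → 3` is a regular epimorphism, yet in the commutative diagram with
top row `|2| --id--> |2| --{0↦0,1↦1}--> 2`, bottom row `2⊔2 --e--> 3 --id--> 3`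
and verticals `{0↦0,1↦1'}`, `{0↦0,1↦2}`, `{0↦0,1↦2}`, the left square and the
outer square are pullbacks, but the right square is not a pullback: `e` does
not satisfy the other pullback lemma. -/
theorem pos_counterexample_to_other_pullback_lemma :
    Nonempty (RegularEpi e) ∧
    IsPullback (𝟙 (PartOrd.of DBool)) vA vB e ∧
    IsPullback (𝟙 (PartOrd.of DBool) ≫ t₂) vA vC (e ≫ 𝟙 (PartOrd.of (Fin 3))) ∧
    ¬ IsPullback t₂ vB vC (𝟙 (PartOrd.of (Fin 3))) := by
  refine ⟨⟨regularEpiE⟩, ?_, ?_, fun h => not_isIso_t₂ h.isIso_fst_of_isIso⟩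
  · exact isPullback_of_surjective_of_reflect_le (ext (by decide)) (by decide) (by decide)
  · rw [Category.id_comp, Category.comp_id]
    exact isPullback_of_surjective_of_reflect_le (ext (by decide)) (by decide) (by decide)
end

section
/- Let p : C → B be a functor and e : X → Y a morphism of B having both cartesian and op-cartesian liftings, with induced adjunction e_! ⊣ e* between fibres. If every counit ε_A : e_!(e*(A)) → A in p_Y is an extremal epimorphism, then the reindexing functor e* : p_Y → p_X is conservative. -/
open CategoryTheory CategoryTheory.Functor

/-- A morphism `f : A ⟶ B` in `𝒞` is *`p`-cartesian* if for every `g : X ⟶ B` in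
`𝒞` and every factorization `p(g) = k ≫ p(f)` in the base, there is exactly one
`h : X ⟶ A` with `p(h) = k` and `h ≫ f = g`. -/
def PCartesian {𝒞 ℬ : Type*} [Category 𝒞] [Category ℬ] (p : 𝒞 ⥤ ℬ)
    {A B : 𝒞} (f : A ⟶ B) : Prop :=
  ∀ {X : 𝒞} (g : X ⟶ B) (k : p.obj X ⟶ p.obj A), p.map g = k ≫ p.map f →
    ∃! h : X ⟶ A, p.map h = k ∧ h ≫ f = g

/-- A morphism `f : A ⟶ B` in `𝒞` is *`p`-op-cartesian* if for every `g : A ⟶ Z`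
and every factorization `p(g) = p(f) ≫ k` in the base, there is exactly one
`h : B ⟶ Z` with `p(h) = k` and `f ≫ h = g`. -/
def OpPCartesian {𝒞 ℬ : Type*} [Category 𝒞] [Category ℬ] (p : 𝒞 ⥤ ℬ)
    {A B : 𝒞} (f : A ⟶ B) : Prop :=
  ∀ {Z : 𝒞} (g : A ⟶ Z) (k : p.obj B ⟶ p.obj Z), p.map g = p.map f ≫ k →
    ∃! h : B ⟶ Z, p.map h = k ∧ f ≫ h = g

/-- A morphism `e` is *extremal* if whenever `e = h ≫ m` with `m` a monomorphism,
`m` is an isomorphism. -/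
def IsExtremalMor {𝒟 : Type*} [Category 𝒟] {X Y : 𝒟} (e : X ⟶ Y) : Prop :=
  ∀ {A : 𝒟} (h : X ⟶ A) (m : A ⟶ Y), Mono m → h ≫ m = e → IsIso m

/-!
Epimorphic counits make the right adjoint `R` faithful, so `R` reflects monomorphisms. If `R.map f`
is an isomorphism for `f : A ⟶ B`, then `f` is therefore a monomorphism, and naturality of the
counit factors `ε_B` as `L (R f)⁻¹ ≫ ε_A ≫ f`; extremality of `ε_B` makes `f` an isomorphism.
-/

namespace CategoryTheory.Adjunction

variable {C D : Type*} [Category C] [Category D] {L : C ⥤ D} {R : D ⥤ C}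

lemma isIso_of_mono_of_isIso_map_of_isExtremalMor_counit (adj : L ⊣ R) {A B : D} (f : A ⟶ B)
    [Mono f] [IsIso (R.map f)] (hB : IsExtremalMor (adj.counit.app B)) : IsIso f :=
  hB (inv (L.map (R.map f)) ≫ adj.counit.app A) f inferInstance (by simp)

lemma reflectsIsomorphisms_of_counit_epi_isExtremalMor (adj : L ⊣ R)
    (h : ∀ B, Epi (adj.counit.app B) ∧ IsExtremalMor (adj.counit.app B)) :
    R.ReflectsIsomorphisms := by
  have : ∀ B, Epi (adj.counit.app B) := fun B => (h B).1
  have : R.Faithful := adj.faithful_R_of_epi_counit_app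
  refine ⟨fun {_ B} f _ => ?_⟩
  have : Mono f := R.mono_of_mono_map inferInstance
  exact adj.isIso_of_mono_of_isIso_map_of_isExtremalMor_counit f (h B).2

end CategoryTheory.Adjunction

theorem reindexing_conservative_of_counit_extremal_epi_general
    {𝒞 ℬ : Type*} [Category 𝒞] [Category ℬ] (p : 𝒞 ⥤ ℬ)
    {X Y : ℬ}
    (Estar : Fiber p Y ⥤ Fiber p X) (Eshriek : Fiber p X ⥤ Fiber p Y)
    -- the induced adjunction `e_! ⊣ e*`, whose counit is determined by the liftings
    (adj : Eshriek ⊣ Estar)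
    (hext : ∀ A : Fiber p Y,
      Epi (adj.counit.app A) ∧ IsExtremalMor (adj.counit.app A)) :
    Estar.ReflectsIsomorphisms :=
  adj.reflectsIsomorphisms_of_counit_epi_isExtremalMor hext

/-- Let `p : 𝒞 ⥤ ℬ` be a functor and `e : X ⟶ Y` a morphism of `ℬ` having both
cartesian and op-cartesian liftings, with induced adjunction `e_! ⊣ e*` between
the fibres. If every counit `ε_A : e_!(e*(A)) ⟶ A` in `p_Y` is an extremal
epimorphism, then the reindexing functor `e* : p_Y ⥤ p_X` is conservative. -/
theorem reindexing_conservative_of_counit_extremal_epi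
    {𝒞 ℬ : Type*} [Category 𝒞] [Category ℬ] (p : 𝒞 ⥤ ℬ)
    {X Y : ℬ} (e : X ⟶ Y)
    (Estar : Fiber p Y ⥤ Fiber p X) (Eshriek : Fiber p X ⥤ Fiber p Y)
    -- cartesian liftings of `e` exhibiting `Estar` as the reindexing functor `e*`
    (lift : ∀ A : Fiber p Y, (Estar.obj A).1 ⟶ A.1)
    (lift_homLift : ∀ A : Fiber p Y, IsHomLift p e (lift A))
    (lift_cart : ∀ A : Fiber p Y, PCartesian p (lift A))
    (lift_nat : ∀ {A A' : Fiber p Y} (f : A ⟶ A'),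
      lift A ≫ f.val = (Estar.map f).val ≫ lift A')
    -- op-cartesian liftings of `e` exhibiting `Eshriek` as `e_!`
    (oplift : ∀ A : Fiber p X, A.1 ⟶ (Eshriek.obj A).1)
    (oplift_homLift : ∀ A : Fiber p X, IsHomLift p e (oplift A))
    (oplift_opcart : ∀ A : Fiber p X, OpPCartesian p (oplift A))
    (oplift_nat : ∀ {A A' : Fiber p X} (f : A ⟶ A'),
      f.val ≫ oplift A' = oplift A ≫ (Eshriek.map f).val)
    -- the induced adjunction `e_! ⊣ e*`, whose counit is determined by the liftings
    (adj : Eshriek ⊣ Estar)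
    (counit_spec : ∀ A : Fiber p Y,
      oplift (Estar.obj A) ≫ (adj.counit.app A).val = lift A)
    (hext : ∀ A : Fiber p Y,
      Epi (adj.counit.app A) ∧ IsExtremalMor (adj.counit.app A)) :
    Estar.ReflectsIsomorphisms :=
  reindexing_conservative_of_counit_extremal_epi_general p Estar Eshriek adj hext
end
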